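/- Let κ be a regular uncountable cardinal and let S ⊆ κ be fat stationary. Consider the poset Q_S whose elements are closed bounded subsets c of κ with c ⊆ S, ordered by end-extension (d ≤ c iff c = d ∩ (sup(c) + 1), i.e., d end-extends c). Then Q_S is locally homogeneous: for any two conditions c and d in Q_S, there exist end-extensions c⁺ ≤ c and d⁺ ≤ d such that the cones {e ∈ Q_S | e ≤ c⁺} and {e ∈ Q_S | e ≤ d⁺} are order-isomorphic. -/

import Mathlib

open Set

/-- `C` is a closed unbounded (club) subset of the ordinal `κ`. -/
def ClubIn (C : Set Ordinal) (κ : Ordinal) : Prop :=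
  C ⊆ Set.Iio κ ∧
  (∀ θ < κ, ∃ α ∈ C, θ < α) ∧
  (∀ γ, γ < κ → γ ≠ 0 → (∀ θ < γ, ∃ α ∈ C, θ < α ∧ α < γ) → γ ∈ C)

/-- `S` is stationary in `κ`: it meets every club subset of `κ`. -/
def StatIn (S : Set Ordinal) (κ : Ordinal) : Prop :=
  ∀ C, ClubIn C κ → (S ∩ C).Nonempty
/-- `X` is a closed copy of `β + 1` inside `Y`: a subset of `Y` of
order type `β + 1` (witnessed by a strictly monotone enumeration indexed by
`Set.Iic β`) containing all of its (nonzero) limit points. -/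
def ClosedCopy (β : Ordinal) (X Y : Set Ordinal) : Prop :=
  X ⊆ Y ∧ (∃ f : Ordinal → Ordinal, StrictMonoOn f (Set.Iic β) ∧ f '' Set.Iic β = X) ∧
  (∀ γ, γ ≠ 0 → (∀ θ < γ, ∃ α ∈ X, θ < α ∧ α < γ) → γ ∈ X)

/-- `S` is fat stationary in `κ`: every club subset of `κ` contains closed
copies of `β + 1` inside its intersection with `S`, for every `β < κ`. -/
def FatStatIn (S : Set Ordinal) (κ : Ordinal) : Prop :=
  S ⊆ Set.Iio κ ∧ ∀ C, ClubIn C κ → ∀ β < κ, ∃ X, ClosedCopy β X (S ∩ C)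
/-- `c` is a condition of the club-shooting forcing: a closed bounded subset of `S` (below `κ`). -/
def ClosedBddIn (c : Set Ordinal) (S : Set Ordinal) (κ : Ordinal) : Prop :=
  c ⊆ S ∧ (∃ θ < κ, ∀ α ∈ c, α < θ) ∧
  (∀ γ, γ ≠ 0 → (∀ θ < γ, ∃ α ∈ c, θ < α ∧ α < γ) → γ ∈ c)

/-- `d` end-extends `c`: `d ⊇ c` and all new points are above all points of `c`. -/
def EndExt (d c : Set Ordinal) : Prop :=
  c ⊆ d ∧ ∀ α ∈ d, α ∉ c → ∀ β ∈ c, β < α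

/-!
Pick a point `γ ∈ S` above both `c` and `d` (possible since `S` is stationary, hence unbounded),
and put `c⁺ = c ∪ {γ}`, `d⁺ = d ∪ {γ}`. Both have maximum `γ`, so every end-extension `e` of `c⁺`
is `c⁺ ∪ (e ∩ (γ, κ))`, and exchanging the head `c⁺` for `d⁺` is an isomorphism between the cones
below `c⁺` and below `d⁺`. The tail stays closed because `γ` separates it from the head.
-/

variable {S : Set Ordinal} {κ θ γ : Ordinal} {b b' e e₁ e₂ : Set Ordinal}

theorem clubIn_Ioo (hκ : Order.IsSuccLimit κ) (hθ : θ < κ) : ClubIn (Ioo θ κ) κ := by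
  refine ⟨fun α hα => hα.2, fun η hη => ?_, fun δ hδκ hδ0 hcof => ?_⟩
  · exact ⟨max η θ + 1, ⟨(le_max_right η θ).trans_lt (lt_add_one _),
      hκ.add_one_lt (max_lt hη hθ)⟩, (le_max_left η θ).trans_lt (lt_add_one _)⟩
  · obtain ⟨α, hα, -, hαδ⟩ := hcof 0 (pos_iff_ne_zero.2 hδ0)
    exact ⟨hα.1.trans hαδ, hδκ⟩

theorem FatStatIn.statIn (hS : FatStatIn S κ) (hκ : 0 < κ) : StatIn S κ := by
  intro C hC
  obtain ⟨X, hXSC, ⟨f, -, rfl⟩, -⟩ := hS.2 C hC 0 hκ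
  exact ⟨f 0, hXSC (mem_image_of_mem f (mem_Iic.2 le_rfl))⟩

theorem StatIn.inter_Ioo_nonempty (hS : StatIn S κ) (hκ : Order.IsSuccLimit κ) (hθ : θ < κ) :
    (S ∩ Ioo θ κ).Nonempty :=
  hS _ (clubIn_Ioo hκ hθ)

theorem isGreatest_insert_of_forall_lt (hbγ : ∀ α ∈ b, α < γ) : IsGreatest (insert γ b) γ :=
  ⟨mem_insert γ b, by
    rintro α (rfl | hα)
    exacts [le_rfl, (hbγ α hα).le]⟩

theorem endExt_insert_of_forall_lt (hbγ : ∀ α ∈ b, α < γ) : EndExt (insert γ b) b := by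
  refine ⟨subset_insert γ b, fun α hα hαb β hβ => ?_⟩
  obtain rfl | hα := hα
  exacts [hbγ β hβ, absurd hα hαb]

theorem ClosedBddIn.insert (hb : ClosedBddIn b S κ) (hγS : γ ∈ S) (hγκ : γ + 1 < κ)
    (hbγ : ∀ α ∈ b, α < γ) : ClosedBddIn (insert γ b) S κ := by
  obtain ⟨hbS, -, hbcl⟩ := hb
  refine ⟨insert_subset hγS hbS, ⟨γ + 1, hγκ, ?_⟩, fun δ hδ0 hcof => ?_⟩
  · rintro α (rfl | hα)
    exacts [lt_add_one α, (hbγ α hα).trans (lt_add_one γ)]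
  rcases lt_trichotomy δ γ with hδγ | rfl | hγδ
  · refine Or.inr (hbcl δ hδ0 fun θ hθ => ?_)
    obtain ⟨α, rfl | hα, hθα, hαδ⟩ := hcof θ hθ
    exacts [absurd hδγ hαδ.asymm, ⟨α, hα, hθα, hαδ⟩]
  · exact mem_insert δ b
  · obtain ⟨α, rfl | hα, hγα, -⟩ := hcof γ hγδ
    exacts [absurd hγα (lt_irrefl α), absurd hγα (hbγ α hα).asymm]

theorem ClosedBddIn.union_inter_Ioi (hb : ClosedBddIn b S κ) (hbγ : γ ∈ upperBounds b)
    (he : ClosedBddIn e S κ) : ClosedBddIn (b ∪ e ∩ Ioi γ) S κ := by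
  obtain ⟨hbS, ⟨θb, hθbκ, hθb⟩, hbcl⟩ := hb
  obtain ⟨heS, ⟨θe, hθeκ, hθe⟩, hecl⟩ := he
  refine ⟨union_subset hbS (inter_subset_left.trans heS),
    ⟨max θb θe, max_lt hθbκ hθeκ, ?_⟩, fun δ hδ0 hcof => ?_⟩
  · rintro α (hα | ⟨hα, -⟩)
    exacts [lt_max_of_lt_left (hθb α hα), lt_max_of_lt_right (hθe α hα)]
  rcases le_or_gt δ γ with hδγ | hγδ
  · refine Or.inl (hbcl δ hδ0 fun θ hθ => ?_)
    obtain ⟨α, hα | ⟨-, hγα⟩, hθα, hαδ⟩ := hcof θ hθ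
    exacts [⟨α, hα, hθα, hαδ⟩, absurd (hαδ.trans_le hδγ) (mem_Ioi.1 hγα).asymm]
  · refine Or.inr ⟨hecl δ hδ0 fun θ hθ => ?_, hγδ⟩
    obtain ⟨α, hα | ⟨hα, -⟩, hθα, hαδ⟩ := hcof (max θ γ) (max_lt hθ hγδ)
    exacts [absurd (hbγ hα) (not_le.2 ((le_max_right θ γ).trans_lt hθα)),
      ⟨α, hα, (le_max_left θ γ).trans_lt hθα, hαδ⟩]

theorem endExt_union_inter_Ioi (hbγ : γ ∈ upperBounds b) : EndExt (b ∪ e ∩ Ioi γ) b := by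
  refine ⟨subset_union_left, fun α hα hαb β hβ => ?_⟩
  obtain hα | ⟨-, hγα⟩ := hα
  exacts [absurd hα hαb, (hbγ hβ).trans_lt hγα]

theorem EndExt.union_inter_Ioi (hbγ : γ ∈ upperBounds b) (h : EndExt e₁ e₂) :
    EndExt (b ∪ e₁ ∩ Ioi γ) (b ∪ e₂ ∩ Ioi γ) := by
  refine ⟨union_subset_union_right b (inter_subset_inter_left _ h.1), ?_⟩
  rintro α (hα | ⟨hαe, hγα⟩) hαn β hβ
  · exact absurd (Or.inl hα) hαn
  obtain hβ | ⟨hβe, -⟩ := hβ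
  · exact (hbγ hβ).trans_lt hγα
  · exact h.2 α hαe (fun hα => hαn (Or.inr ⟨hα, hγα⟩)) β hβe

theorem union_inter_Ioi_inter_Ioi (hbγ : γ ∈ upperBounds b) :
    (b ∪ e ∩ Ioi γ) ∩ Ioi γ = e ∩ Ioi γ := by
  rw [union_inter_distrib_right, inter_assoc, inter_self, union_eq_right]
  exact fun α ⟨hα, hγα⟩ => absurd (hbγ hα) (not_le.2 hγα)

theorem EndExt.union_inter_Ioi_eq (hγb : γ ∈ b) (h : EndExt e b) : b ∪ e ∩ Ioi γ = e := by
  refine (union_subset h.1 inter_subset_left).antisymm fun α hα => ?_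
  by_cases hαb : α ∈ b
  exacts [Or.inl hαb, Or.inr ⟨hα, h.2 α hα hαb γ hγb⟩]

abbrev Cone (S : Set Ordinal) (κ : Ordinal) (b : Set Ordinal) : Type _ :=
  {e : Set Ordinal // ClosedBddIn e S κ ∧ EndExt e b}

namespace Cone

def graft (hb : ClosedBddIn b S κ) (hbγ : γ ∈ upperBounds b) (e : Cone S κ b') : Cone S κ b :=
  ⟨b ∪ e.1 ∩ Ioi γ, hb.union_inter_Ioi hbγ e.2.1, endExt_union_inter_Ioi hbγ⟩

theorem graft_graft (hb : ClosedBddIn b S κ) (hbγ : IsGreatest b γ) (hb' : ClosedBddIn b' S κ)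
    (hb'γ : γ ∈ upperBounds b') (e : Cone S κ b) :
    graft hb hbγ.2 (graft hb' hb'γ e) = e :=
  Subtype.ext <| by
    simp only [graft]
    rw [union_inter_Ioi_inter_Ioi hb'γ, e.2.2.union_inter_Ioi_eq hbγ.1]

theorem endExt_graft (hb : ClosedBddIn b S κ) (hbγ : γ ∈ upperBounds b) {e₁ e₂ : Cone S κ b'}
    (h : EndExt e₁.1 e₂.1) : EndExt (graft hb hbγ e₁).1 (graft hb hbγ e₂).1 :=
  h.union_inter_Ioi hbγ

def equivOfIsGreatest (hb : ClosedBddIn b S κ) (hbγ : IsGreatest b γ)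
    (hb' : ClosedBddIn b' S κ) (hb'γ : IsGreatest b' γ) : Cone S κ b ≃ Cone S κ b' where
  toFun := graft hb' hb'γ.2
  invFun := graft hb hbγ.2
  left_inv := graft_graft hb hbγ hb' hb'γ.2
  right_inv := graft_graft hb' hb'γ hb hbγ.2

theorem endExt_equivOfIsGreatest_iff (hb : ClosedBddIn b S κ) (hbγ : IsGreatest b γ)
    (hb' : ClosedBddIn b' S κ) (hb'γ : IsGreatest b' γ) (e₁ e₂ : Cone S κ b) :
    EndExt e₁.1 e₂.1 ↔ EndExt (equivOfIsGreatest hb hbγ hb' hb'γ e₁).1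
      (equivOfIsGreatest hb hbγ hb' hb'γ e₂).1 := by
  refine ⟨endExt_graft hb' hb'γ.2, fun h => ?_⟩
  convert endExt_graft hb hbγ.2 h using 1 <;>
    exact congrArg Subtype.val (graft_graft hb hbγ hb' hb'γ.2 _).symm

end Cone

theorem club_shooting_locally_homogeneous_general (κ : Cardinal)
    (hunc : Cardinal.aleph0 < κ) (S : Set Ordinal) (hS : FatStatIn S κ.ord)
    (c d : Set Ordinal) (hc : ClosedBddIn c S κ.ord) (hd : ClosedBddIn d S κ.ord) :
    ∃ c' d' : Set Ordinal, ClosedBddIn c' S κ.ord ∧ ClosedBddIn d' S κ.ord ∧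
      EndExt c' c ∧ EndExt d' d ∧
      ∃ φ : {e : Set Ordinal // ClosedBddIn e S κ.ord ∧ EndExt e c'} ≃
            {e : Set Ordinal // ClosedBddIn e S κ.ord ∧ EndExt e d'},
        ∀ e₁ e₂, EndExt e₁.val e₂.val ↔ EndExt (φ e₁).val (φ e₂).val := by
  have hκ : Order.IsSuccLimit κ.ord := Cardinal.isSuccLimit_ord hunc.le
  obtain ⟨θc, hθcκ, hθc⟩ := hc.2.1
  obtain ⟨θd, hθdκ, hθd⟩ := hd.2.1
  obtain ⟨γ, hγS, hθγ, hγκ⟩ :=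
    (hS.statIn hκ.pos).inter_Ioo_nonempty hκ (max_lt hθcκ hθdκ)
  have hcγ : ∀ α ∈ c, α < γ := fun α hα => (hθc α hα).trans ((le_max_left _ _).trans_lt hθγ)
  have hdγ : ∀ α ∈ d, α < γ := fun α hα => (hθd α hα).trans ((le_max_right _ _).trans_lt hθγ)
  have hc' := hc.insert hγS (hκ.add_one_lt hγκ) hcγ
  have hd' := hd.insert hγS (hκ.add_one_lt hγκ) hdγ
  have hc'γ := isGreatest_insert_of_forall_lt hcγ
  have hd'γ := isGreatest_insert_of_forall_lt hdγ
  exact ⟨_, _, hc', hd', endExt_insert_of_forall_lt hcγ, endExt_insert_of_forall_lt hdγ,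
    Cone.equivOfIsGreatest hc' hc'γ hd' hd'γ,
    Cone.endExt_equivOfIsGreatest_iff hc' hc'γ hd' hd'γ⟩

theorem club_shooting_locally_homogeneous (κ : Cardinal) (hreg : κ.IsRegular)
    (hunc : Cardinal.aleph0 < κ) (S : Set Ordinal) (hS : FatStatIn S κ.ord)
    (c d : Set Ordinal) (hc : ClosedBddIn c S κ.ord) (hd : ClosedBddIn d S κ.ord) :
    ∃ c' d' : Set Ordinal, ClosedBddIn c' S κ.ord ∧ ClosedBddIn d' S κ.ord ∧
      EndExt c' c ∧ EndExt d' d ∧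
      ∃ φ : {e : Set Ordinal // ClosedBddIn e S κ.ord ∧ EndExt e c'} ≃
            {e : Set Ordinal // ClosedBddIn e S κ.ord ∧ EndExt e d'},
        ∀ e₁ e₂, EndExt e₁.val e₂.val ↔ EndExt (φ e₁).val (φ e₂).val :=
  club_shooting_locally_homogeneous_general κ hunc S hS c d hc hd
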